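/- Fix integers N > m ≥ d ≥ 1 and let φ : ℝ^N → ℝ be a polynomial of total degree at most d. Then for every Boolean input x* ∈ {0,1}^N of Hamming weight |x*| > m, |φ(x*)| ≤ 2^d · C(⌈|x*|/⌊m/d⌋⌉, d) · max_{x ∈ {0,1}^N, |x| ≤ m} |φ(x)|. -/

import Mathlib

/-!
Let `t = ⌊m/d⌋` and split the coordinates where `x*` is `1` into `n = ⌈|x*|/t⌉` blocks of at
most `t` coordinates, `g` sending a coordinate to its block; `d < n` because `|x*| > m ≥ d t`.
A monomial `x^u` evaluates to `1` at the indicator of `A` iff `supp u ⊆ A`, and for `|A| ≤ d < n`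
  `∑_{|T| ≤ d, A ⊆ T} w(|T|) = 1`,  where `w(k) = (-1)^(d-k) C(n-k-1, d-k)`:
indeed `w(|T|) = ∑_{T ⊆ S, |S| ≤ d} (-1)^(|S|-|T|)`, and swapping the two sums leaves only the
term `S = A` (Möbius inversion on the Boolean lattice). Applied to `A = g(supp u)` for every
monomial of `φ`, this gives
  `φ(x*) = ∑_{|T| ≤ d} w(|T|) φ(x* ∧ 1_{g⁻¹ T})`,
where every point on the right has weight at most `d t ≤ m`. Finally
`∑_{|T| ≤ d} |w(|T|)| ≤ ∑_k C(n,k) C(n-k,d-k) = 2^d C(n,d)`.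
-/

open Finset MvPolynomial

namespace Finset

theorem sum_powerset_filter_card_le {α M : Type*} [AddCommMonoid M] (X : Finset α) (d : ℕ)
    (f : ℕ → M) :
    ∑ T ∈ X.powerset with #T ≤ d, f #T = ∑ j ∈ range (d + 1), (#X).choose j • f j := by
  rw [← sum_fiberwise_of_maps_to (g := card) (t := range (d + 1))
    fun T hT => mem_range.2 (Nat.lt_succ_of_le (mem_filter.1 hT).2)]
  refine sum_congr rfl fun j hj => ?_
  have hfiber : {T ∈ {T ∈ X.powerset | #T ≤ d} | #T = j} = powersetCard j X := by
    ext T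
    rw [mem_range] at hj
    simp only [mem_filter, mem_powerset, mem_powersetCard]
    exact ⟨fun h => ⟨h.1.1, h.2⟩, fun h => ⟨⟨h.1, by omega⟩, h.2⟩⟩
  rw [hfiber, ← card_powersetCard, ← sum_const]
  exact sum_congr rfl fun T hT => by rw [(mem_powersetCard.1 hT).2]

variable {α : Type*} [DecidableEq α]

theorem sum_Icc_neg_one_pow_card_sub (A S : Finset α) :
    ∑ T ∈ Icc A S, (-1 : ℤ) ^ (#S - #T) = if A = S then 1 else 0 := by
  by_cases hAS : A ⊆ S
  · have hcompl : ∑ T ∈ Icc A S, (-1 : ℤ) ^ (#S - #T) = ∑ V ∈ (S \ A).powerset, (-1) ^ #V := by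
      refine sum_nbij' (S \ ·) (S \ ·) (fun T hT => ?_) (fun V hV => ?_) (fun T hT => ?_)
        (fun V hV => ?_) (fun T hT => ?_) <;> simp only [mem_Icc, mem_powerset] at *
      · exact sdiff_subset_sdiff subset_rfl hT.1
      · exact ⟨subset_sdiff.2 ⟨hAS, disjoint_of_subset_right hV disjoint_sdiff⟩, sdiff_subset⟩
      · exact sdiff_sdiff_eq_self hT.2
      · exact sdiff_sdiff_eq_self (hV.trans sdiff_subset)
      · rw [card_sdiff_of_subset hT.2]
    rw [hcompl, sum_powerset_neg_one_pow_card]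
    refine if_congr ?_ rfl rfl
    rw [sdiff_eq_empty_iff_subset]
    exact ⟨(subset_antisymm hAS ·), fun h => h ▸ subset_rfl⟩
  · rw [Icc_eq_empty (by simpa using hAS), sum_empty,
      if_neg (by rintro rfl; exact hAS subset_rfl)]

theorem exists_fiber_card_le {α : Type*} (S : Finset α) {n t : ℕ} (hn : 0 < n) (ht : 0 < t)
    (hS : #S ≤ t * n) : ∃ g : α → Fin n, ∀ j, #{i ∈ S | g i = j} ≤ t := by
  classical
  let k : α → ℕ := fun i => if h : i ∈ S then S.equivFin ⟨i, h⟩ else 0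
  have hk_lt : ∀ i, k i < t * n := fun i => by
    by_cases h : i ∈ S
    · simpa [k, h] using (S.equivFin ⟨i, h⟩).2.trans_le hS
    · simpa [k, h] using Nat.mul_pos ht hn
  have hk_inj : Set.InjOn k S := fun i hi i' hi' h => by
    simp only [k, dif_pos (mem_coe.1 hi), dif_pos (mem_coe.1 hi')] at h
    exact congrArg Subtype.val (S.equivFin.injective (Fin.ext h))
  refine ⟨fun i => ⟨k i / t, Nat.div_lt_of_lt_mul (hk_lt i)⟩, fun j => ?_⟩
  -- inside a block, `k i` is determined by its remainder mod `t`
  refine (card_le_card_of_injOn (fun i => k i % t) (fun i _ => ?_) ?_).trans (card_range t).le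
  · exact mem_range.2 (Nat.mod_lt _ ht)
  · intro i hi i' hi' h
    simp only [coe_filter, Set.mem_ofPred_eq, Fin.ext_iff] at hi hi'
    refine hk_inj hi.1 hi'.1 ?_
    rw [← Nat.div_add_mod (k i) t, ← Nat.div_add_mod (k i') t, hi.2, hi'.2]
    exact congrArg _ h

theorem card_filter_mem_le_mul {α β : Type*} [DecidableEq β] {S : Finset α} {g : α → β} {t : ℕ}
    (hg : ∀ j, #{i ∈ S | g i = j} ≤ t) (T : Finset β) : #{i ∈ S | g i ∈ T} ≤ t * #T :=
  card_le_mul_card_image_of_maps_to (fun _ hi => (mem_filter.1 hi).2) t fun j _ => by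
    rw [filter_filter]
    exact (card_le_card (monotone_filter_right S fun _ _ h => h.2)).trans (hg j)

end Finset

def extrapolationWeight (n d k : ℕ) : ℤ := (-1) ^ (d - k) * (n - k - 1).choose (d - k)

theorem abs_extrapolationWeight (n d k : ℕ) :
    |extrapolationWeight n d k| = (n - k - 1).choose (d - k) := by
  simp [extrapolationWeight, abs_mul]

section Weights

variable {τ : Type*} [Fintype τ] {d : ℕ}

theorem sum_choose_sub_le_two_pow_mul_choose :
    ∑ T : Finset τ with #T ≤ d, (Fintype.card τ - #T - 1).choose (d - #T) ≤
      2 ^ d * (Fintype.card τ).choose d := by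
  set n := Fintype.card τ
  rw [← powerset_univ, sum_powerset_filter_card_le univ d fun k => (n - k - 1).choose (d - k),
    card_univ]
  calc ∑ j ∈ range (d + 1), n.choose j • (n - j - 1).choose (d - j)
      ≤ ∑ j ∈ range (d + 1), n.choose d * d.choose j := by
        refine sum_le_sum fun j hj => ?_
        have hjd : j ≤ d := Nat.lt_succ_iff.1 (mem_range.1 hj)
        calc n.choose j • (n - j - 1).choose (d - j)
            ≤ n.choose j * (n - j).choose (d - j) :=
              Nat.mul_le_mul_left _ (Nat.choose_le_choose _ (Nat.sub_le _ 1))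
          _ = n.choose d * d.choose j := (Nat.choose_mul hjd).symm
    _ = 2 ^ d * n.choose d := by rw [← mul_sum, Nat.sum_range_choose, mul_comm]

variable [DecidableEq τ]

theorem sum_superset_card_le_neg_one_pow (hd : d < Fintype.card τ) {T : Finset τ}
    (hT : #T ≤ d) :
    ∑ S with T ⊆ S ∧ #S ≤ d, (-1 : ℤ) ^ (#S - #T) =
      extrapolationWeight (Fintype.card τ) d #T := by
  have hcompl : ∑ S with T ⊆ S ∧ #S ≤ d, (-1 : ℤ) ^ (#S - #T) =
      ∑ W ∈ Tᶜ.powerset with #W ≤ d - #T, (-1) ^ #W := by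
    refine sum_nbij' (· \ T) (· ∪ T) (fun S hS => ?_) (fun W hW => ?_) (fun S hS => ?_)
      (fun W hW => ?_) (fun S hS => ?_) <;>
      simp only [mem_filter, mem_univ, true_and, mem_powerset] at *
    · refine ⟨fun i hi => mem_compl.2 (mem_sdiff.1 hi).2, ?_⟩
      rw [card_sdiff_of_subset hS.1]
      omega
    · refine ⟨subset_union_right, ?_⟩
      rw [card_union_of_disjoint (disjoint_of_subset_left hW.1 disjoint_compl_left)]
      omega
    · exact sdiff_union_of_subset hS.1
    · exact union_sdiff_cancel_right (disjoint_of_subset_left hW.1 disjoint_compl_left)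
    · rw [card_sdiff_of_subset hS.1]
  rw [hcompl, sum_powerset_filter_card_le, card_compl,
    show Fintype.card τ - #T = (Fintype.card τ - #T - 1) + 1 by omega]
  simp only [nsmul_eq_mul, mul_comm ((_ : ℕ) : ℤ)]
  exact Int.alternating_sum_range_choose_eq_choose

theorem sum_superset_extrapolationWeight (hd : d < Fintype.card τ) {A : Finset τ}
    (hA : #A ≤ d) :
    ∑ T with #T ≤ d ∧ A ⊆ T, extrapolationWeight (Fintype.card τ) d #T = 1 := by
  calc ∑ T with #T ≤ d ∧ A ⊆ T, extrapolationWeight (Fintype.card τ) d #T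
      = ∑ T with #T ≤ d ∧ A ⊆ T, ∑ S with T ⊆ S ∧ #S ≤ d, (-1 : ℤ) ^ (#S - #T) :=
        sum_congr rfl fun T hT =>
          (sum_superset_card_le_neg_one_pow hd (mem_filter.1 hT).2.1).symm
    _ = ∑ S with #S ≤ d, ∑ T ∈ Icc A S, (-1 : ℤ) ^ (#S - #T) := by
        refine sum_comm' fun T S => ?_
        simp only [mem_filter, mem_univ, true_and, mem_Icc]
        exact ⟨fun h => ⟨⟨h.1.2, h.2.1⟩, h.2.2⟩,
          fun h => ⟨⟨(card_le_card h.1.2).trans h.2, h.1.1⟩, h.1.2, h.2⟩⟩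
    _ = 1 := by
        simp only [sum_Icc_neg_one_pow_card_sub, sum_ite_eq, mem_filter, mem_univ, true_and,
          if_pos hA]

end Weights

namespace MvPolynomial

variable {σ R : Type*} [CommSemiring R]

theorem eval_boole_eq_sum_coeff (φ : MvPolynomial σ R) (p : σ → Prop) [DecidablePred p] :
    eval (fun i => if p i then 1 else 0) φ =
      ∑ u ∈ φ.support with ∀ i ∈ u.support, p i, coeff u φ := by
  rw [eval_eq, sum_filter]
  refine sum_congr rfl fun u _ => ?_
  have hpow : ∀ i ∈ u.support, (if p i then (1 : R) else 0) ^ u i = if p i then 1 else 0 :=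
    fun i hi => by split_ifs <;> simp [Finsupp.mem_support_iff.1 hi]
  rw [prod_congr rfl hpow, prod_boole, mul_boole]

theorem card_support_le_totalDegree {φ : MvPolynomial σ R} {u : σ →₀ ℕ} (hu : u ∈ φ.support) :
    #u.support ≤ φ.totalDegree := by
  classical
  calc #u.support = #u.toMultiset.toFinset := by rw [Finsupp.toFinset_toMultiset]
    _ ≤ Multiset.card u.toMultiset := Multiset.toFinset_card_le _
    _ = u.sum fun _ e => e := Finsupp.card_toMultiset u
    _ ≤ φ.totalDegree := le_totalDegree hu

end MvPolynomial

section Extrapolation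

variable {σ τ R : Type*} [Fintype τ] [DecidableEq τ] [CommRing R] {d : ℕ}

theorem sum_extrapolationWeight_boole (hd : d < Fintype.card τ) (g : σ → τ) (p : σ → Prop)
    [DecidablePred p] {s : Finset σ} (hs : #s ≤ d) :
    ∑ T : Finset τ with #T ≤ d,
        (if ∀ i ∈ s, p i ∧ g i ∈ T then (extrapolationWeight (Fintype.card τ) d #T : R) else 0) =
      if ∀ i ∈ s, p i then 1 else 0 := by
  by_cases hp : ∀ i ∈ s, p i
  · have hcond : ∀ T : Finset τ, (∀ i ∈ s, p i ∧ g i ∈ T) ↔ s.image g ⊆ T := fun T => by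
      simp only [image_subset_iff]
      exact ⟨fun h i hi => (h i hi).2, fun h i hi => ⟨hp i hi, h i hi⟩⟩
    simp_rw [hcond]
    rw [← sum_filter, filter_filter, if_pos hp]
    rw [← Int.cast_sum, sum_superset_extrapolationWeight hd (card_image_le.trans hs),
      Int.cast_one]
  · rw [if_neg hp]
    exact sum_eq_zero fun T _ => if_neg fun h => hp fun i hi => (h i hi).1

theorem eval_boole_eq_sum_extrapolationWeight (hd : d < Fintype.card τ)
    {φ : MvPolynomial σ R} (hφ : φ.totalDegree ≤ d) (g : σ → τ) (p : σ → Prop)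
    [DecidablePred p] :
    eval (fun i => if p i then 1 else 0) φ =
      ∑ T : Finset τ with #T ≤ d, (extrapolationWeight (Fintype.card τ) d #T : R) *
        eval (fun i => if p i ∧ g i ∈ T then 1 else 0) φ := by
  simp only [eval_boole_eq_sum_coeff, sum_filter (s := φ.support), mul_sum]
  rw [sum_comm]
  refine sum_congr rfl fun u hu => ?_
  have hu' : #u.support ≤ d := (card_support_le_totalDegree hu).trans hφ
  rw [← mul_boole, ← sum_extrapolationWeight_boole hd g p hu', mul_sum]
  refine sum_congr rfl fun T _ => ?_
  split_ifs <;> ring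

end Extrapolation

section Bound

variable {σ τ R : Type*} [Fintype τ] [DecidableEq τ] [CommRing R] [LinearOrder R]
  [IsStrictOrderedRing R] {d : ℕ}

theorem abs_eval_boole_le (hd : d < Fintype.card τ) {φ : MvPolynomial σ R}
    (hφ : φ.totalDegree ≤ d) (g : σ → τ) (p : σ → Prop) [DecidablePred p] {B : R}
    (hB : ∀ T : Finset τ, #T ≤ d → |eval (fun i => if p i ∧ g i ∈ T then 1 else 0) φ| ≤ B) :
    |eval (fun i => if p i then 1 else 0) φ| ≤ 2 ^ d * (Fintype.card τ).choose d * B := by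
  have hB0 : 0 ≤ B := (abs_nonneg _).trans (hB ∅ (card_empty.trans_le d.zero_le))
  rw [eval_boole_eq_sum_extrapolationWeight hd hφ g p]
  calc _ ≤ ∑ T : Finset τ with #T ≤ d, ((Fintype.card τ - #T - 1).choose (d - #T) : R) * B := by
        refine (abs_sum_le_sum_abs _ _).trans (sum_le_sum fun T hT => ?_)
        rw [abs_mul, ← Int.cast_abs, abs_extrapolationWeight, Int.cast_natCast]
        exact mul_le_mul_of_nonneg_left (hB T (mem_filter.1 hT).2) (Nat.cast_nonneg _)
    _ = ((∑ T : Finset τ with #T ≤ d, (Fintype.card τ - #T - 1).choose (d - #T) : ℕ) : R) * B := by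
        rw [Nat.cast_sum, sum_mul]
    _ ≤ ((2 ^ d * (Fintype.card τ).choose d : ℕ) : R) * B := by
        gcongr
        exact sum_choose_sub_le_two_pow_mul_choose
    _ = 2 ^ d * (Fintype.card τ).choose d * B := by push_cast; rfl

end Bound

/-- Generalized extrapolation lemma: for integers `N > m ≥ d ≥ 1` and a polynomial
`φ : ℝ^N → ℝ` of total degree at most `d`, every Boolean input `x*` of Hamming weight
`> m` satisfies `|φ(x*)| ≤ 2^d · C(⌈|x*|/⌊m/d⌋⌉, d) · max_{|x| ≤ m} |φ(x)|`. -/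
theorem generalized_extrapolation_lemma (N m d : ℕ) (hd : 1 ≤ d) (hmd : d ≤ m)
    (φ : MvPolynomial (Fin N) ℝ) (hdeg : φ.totalDegree ≤ d)
    (xstar : Fin N → Bool) (hx : m < (Finset.univ.filter (fun i => xstar i)).card) :
    |MvPolynomial.eval (fun i => if xstar i then (1 : ℝ) else 0) φ| ≤
      2 ^ d *
        (Nat.choose
          (((Finset.univ.filter (fun i => xstar i)).card + (m / d) - 1) / (m / d)) d) *
        ((Finset.univ.filter
            (fun b : Fin N → Bool => (Finset.univ.filter (fun i => b i)).card ≤ m)).sup'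
          ⟨fun _ => false, by simp⟩
          (fun b => |MvPolynomial.eval (fun i => if b i then (1 : ℝ) else 0) φ|)) := by
  set S := univ.filter fun i => xstar i
  set t := m / d
  have ht : 0 < t := Nat.div_pos hmd hd
  have hdt : d * t ≤ m := Nat.mul_div_le m d
  rw [← Nat.ceilDiv_eq_add_pred_div]
  set n := #S ⌈/⌉ t
  have hdn : d < n := lt_of_not_ge fun h => by
    have := (ceilDiv_le_iff_le_smul ht).1 h
    rw [smul_eq_mul, mul_comm] at this
    omega
  obtain ⟨g, hg⟩ := exists_fiber_card_le S (n := n) (by omega) ht (le_smul_ceilDiv ht)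
  have hbound := fun B => abs_eval_boole_le (τ := Fin n) (B := B) (by simpa using hdn) hdeg g
    (fun i => xstar i)
  rw [Fintype.card_fin] at hbound
  refine hbound _ fun T hT => ?_
  let b : Fin N → Bool := fun i => xstar i ∧ g i ∈ T
  refine le_sup'_of_le _ (b := b) (mem_filter.2 ⟨mem_univ _, ?_⟩) (by simp [b])
  have hbS : (univ.filter fun i => b i) = {i ∈ S | g i ∈ T} := by ext; simp [b, S]
  rw [hbS]
  calc _ ≤ t * #T := card_filter_mem_le_mul hg T
    _ ≤ t * d := Nat.mul_le_mul_left t hT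
    _ ≤ m := by rwa [mul_comm]
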